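/- arXiv:1702.05127 — 2 statements merged into one kernel-verified Lean document; each statement's English description precedes it below -/
import Mathlib

section
/- Let L ⊆ ℝ^m be a linear subspace and let x ∈ ℝ^m with x ∉ L, and set σ = type_L(x). Then the affine hull of the set C(x,L) of l∞-closest points to x in L has the same dimension as the linear space L(σ) = {y ∈ L : y_i = 0 for all i with σ_i ≠ 0}. -/
/-- The set of points of `S` that are `l∞`-closest to `x` (the `Fin m → ℝ` metric is
the sup metric). -/
noncomputable def closestPts {m : ℕ} (x : Fin m → ℝ) (S : Set (Fin m → ℝ)) :
    Set (Fin m → ℝ) :=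
  {y ∈ S | dist x y = Metric.infDist x S}

open scoped Classical in
/-- The type of `x` with respect to a linear subspace `L`: the sign vector of the minimal
face of the cube of radius `d(x,L)` around `x` containing the set of closest points;
defined to be the zero sign vector when `x ∈ L`. -/
noncomputable def typeL {m : ℕ} (L : Submodule ℝ (Fin m → ℝ)) (x : Fin m → ℝ) :
    Fin m → SignType := fun i =>
  if x ∈ L then 0
  else if ∀ y ∈ closestPts x (L : Set (Fin m → ℝ)),
      y i = x i + Metric.infDist x (L : Set (Fin m → ℝ)) then 1
  else if ∀ y ∈ closestPts x (L : Set (Fin m → ℝ)),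
      y i = x i - Metric.infDist x (L : Set (Fin m → ℝ)) then -1
  else 0

/-- Membership in the oriented matroid associated to `L`: `σ` is the sign vector of some
linear functional vanishing on `L`. -/
def inOM {m : ℕ} (L : Submodule ℝ (Fin m → ℝ)) (σ : Fin m → SignType) : Prop :=
  ∃ c : Fin m → ℝ, (∀ y ∈ L, ∑ i, c i * y i = 0) ∧ ∀ i, SignType.sign (c i) = σ i


/-- The coordinate subspace of vectors vanishing on the support of `σ`. -/
def zeroOnSupp {m : ℕ} (σ : Fin m → SignType) : Submodule ℝ (Fin m → ℝ) where
  carrier := {y | ∀ i, σ i ≠ 0 → y i = 0}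
  add_mem' := by
    intro a b ha hb i hi
    simp [Pi.add_apply, ha i hi, hb i hi]
  zero_mem' := by intro i _; rfl
  smul_mem' := by
    intro c a ha i hi
    simp [Pi.smul_apply, ha i hi]

/-! The closest points form the convex set `C = L ∩ B`, with `B` the cube of radius
`r = d(x, L)` around `x`. On a coordinate `i` with `σ i ≠ 0` every point of `C` lies on the
same facet of `B`, so differences of points of `C` lie in `L(σ)`. On every other coordinate
some point of `C` avoids the upper facet and some point avoids the lower one; averaging all
these witnesses gives `z ∈ C` strictly inside the slab `|y i - x i| < r` for each `i` with
`σ i = 0`. From `z` one can move a little along any `v ∈ L(σ)` without leaving `C`, so `L(σ)`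
is contained in the direction of the affine span of `C`. -/

open Filter Topology Metric

theorem exists_mem_forall_lt_of_convexOn {ι E : Type*} [AddCommGroup E] [Module ℝ E]
    {C : Set E} (hC : Convex ℝ C) (hne : C.Nonempty) {s : Finset ι} {f : ι → E → ℝ}
    {c : ι → ℝ} (hf : ∀ i ∈ s, ConvexOn ℝ C (f i)) (hle : ∀ i ∈ s, ∀ y ∈ C, f i y ≤ c i)
    (hlt : ∀ i ∈ s, ∃ y ∈ C, f i y < c i) : ∃ z ∈ C, ∀ i ∈ s, f i z < c i := by
  rcases s.eq_empty_or_nonempty with rfl | hs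
  · obtain ⟨z, hz⟩ := hne
    exact ⟨z, hz, by simp⟩
  choose! y hyC hy using hlt
  set w : ℝ := (s.card : ℝ)⁻¹
  have hw : 0 < w := by positivity
  have hw_sum : ∑ _j ∈ s, w = 1 := by simp [w, hs.card_pos.ne']
  refine ⟨∑ j ∈ s, w • y j, hC.sum_mem (fun _ _ => hw.le) hw_sum hyC, fun i hi => ?_⟩
  calc f i (∑ j ∈ s, w • y j) ≤ ∑ j ∈ s, w • f i (y j) :=
        (hf i hi).map_sum_le (fun _ _ => hw.le) hw_sum hyC
    _ < ∑ _j ∈ s, w • c i :=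
        Finset.sum_lt_sum (fun j hj => by gcongr; exact hle i hi _ (hyC j hj))
          ⟨i, hi, by gcongr; exact hy i hi⟩
    _ = c i := by rw [← Finset.sum_smul, hw_sum, one_smul]

theorem eventually_add_smul_mem_closedBall {ι : Type*} [Fintype ι] {x z v : ι → ℝ} {r : ℝ}
    (hz : z ∈ closedBall x r) (hv : ∀ i, v i ≠ 0 → |z i - x i| < r) :
    ∀ᶠ t in 𝓝 (0 : ℝ), z + t • v ∈ closedBall x r := by
  have hr : 0 ≤ r := nonempty_closedBall.1 ⟨z, hz⟩
  simp only [mem_closedBall, dist_pi_le_iff hr, Pi.add_apply, Pi.smul_apply, smul_eq_mul,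
    Real.dist_eq]
  refine eventually_all.2 fun i => ?_
  by_cases hvi : v i = 0
  · have hzi : |z i - x i| ≤ r := by
      simpa [Real.dist_eq] using (dist_le_pi_dist z x i).trans (mem_closedBall.1 hz)
    simpa [hvi] using hzi
  · have hcont : Continuous fun t : ℝ => |z i + t * v i - x i| := by fun_prop
    have := hcont.tendsto 0
    simp only [zero_mul, add_zero] at this
    exact (this.eventually (gt_mem_nhds (hv i hvi))).mono fun _ => le_of_lt

theorem closestPts_eq_inter_closedBall {m : ℕ} (x : Fin m → ℝ) (S : Set (Fin m → ℝ)) :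
    closestPts x S = S ∩ closedBall x (infDist x S) := by
  ext y
  simp only [closestPts, Set.mem_ofPred_eq, Set.mem_inter_iff, mem_closedBall, dist_comm y x]
  exact and_congr_right fun hy => ⟨le_of_eq, fun h => h.antisymm (infDist_le_dist_of_mem hy)⟩

theorem convex_closestPts {m : ℕ} (x : Fin m → ℝ) {S : Set (Fin m → ℝ)} (hS : Convex ℝ S) :
    Convex ℝ (closestPts x S) := by
  rw [closestPts_eq_inter_closedBall]
  exact hS.inter (convex_closedBall x _)

theorem nonempty_closestPts {m : ℕ} (x : Fin m → ℝ) {S : Set (Fin m → ℝ)} (hS : IsClosed S)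
    (hne : S.Nonempty) : (closestPts x S).Nonempty := by
  obtain ⟨y, hyS, hy⟩ := hS.exists_infDist_eq_dist hne x
  exact ⟨y, hyS, hy.symm⟩

theorem abs_sub_le_of_mem_closestPts {m : ℕ} {x y : Fin m → ℝ} {S : Set (Fin m → ℝ)}
    (hy : y ∈ closestPts x S) (i : Fin m) : |y i - x i| ≤ infDist x S := by
  rw [closestPts_eq_inter_closedBall] at hy
  simpa [Real.dist_eq] using (dist_le_pi_dist y x i).trans (mem_closedBall.1 hy.2)

section typeL

variable {m : ℕ} {L : Submodule ℝ (Fin m → ℝ)} {x : Fin m → ℝ}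

local notation "C" => closestPts x (L : Set (Fin m → ℝ))
local notation "r" => infDist x (L : Set (Fin m → ℝ))

theorem typeL_eq_zero_iff (hx : x ∉ L) (i : Fin m) :
    typeL L x i = 0 ↔ ¬(∀ y ∈ C, y i = x i + r) ∧ ¬(∀ y ∈ C, y i = x i - r) := by
  unfold typeL
  split_ifs <;> simp_all

theorem apply_eq_of_typeL_ne_zero (hx : x ∉ L) {i : Fin m} (hi : typeL L x i ≠ 0)
    {y z : Fin m → ℝ} (hy : y ∈ C) (hz : z ∈ C) : y i = z i := by
  rw [Ne, typeL_eq_zero_iff hx, not_and_or, not_not, not_not] at hi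
  rcases hi with h | h <;> rw [h y hy, h z hz]

theorem exists_mem_closestPts_lt_of_typeL_eq_zero (hx : x ∉ L) {i : Fin m}
    (hi : typeL L x i = 0) : (∃ y ∈ C, y i - x i < r) ∧ (∃ y ∈ C, x i - y i < r) := by
  obtain ⟨hplus, hminus⟩ := (typeL_eq_zero_iff hx i).1 hi
  push Not at hplus hminus
  obtain ⟨y, hy, hyi⟩ := hplus
  obtain ⟨y', hy', hy'i⟩ := hminus
  have hbound := abs_le.1 (abs_sub_le_of_mem_closestPts hy i)
  have hbound' := abs_le.1 (abs_sub_le_of_mem_closestPts hy' i)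
  exact ⟨⟨y, hy, lt_of_le_of_ne hbound.2 fun h => hyi (by linarith)⟩,
    ⟨y', hy', lt_of_le_of_ne (by linarith) fun h => hy'i (by linarith)⟩⟩

theorem exists_mem_closestPts_forall_abs_sub_lt (hx : x ∉ L) :
    ∃ z ∈ C, ∀ i, typeL L x i = 0 → |z i - x i| < r := by
  let f : Fin m × Bool → (Fin m → ℝ) → ℝ := fun p y =>
    cond p.2 (y p.1 - x p.1) (x p.1 - y p.1)
  have hf : ∀ p, ConvexOn ℝ C (f p) := by
    rintro ⟨i, b⟩
    let ℓ : (Fin m → ℝ) →ₗ[ℝ] ℝ := cond b (LinearMap.proj i) (-LinearMap.proj i)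
    refine ((ℓ.convexOn (convex_closestPts x L.convex)).add_const (-ℓ x)).congr fun y _ => ?_
    cases b <;> simp only [ℓ, f, cond_true, cond_false, LinearMap.coe_neg, LinearMap.coe_proj,
      LinearMap.neg_apply, Function.eval, Pi.add_apply, Pi.neg_apply] <;> ring
  have hle : ∀ p, ∀ y ∈ C, f p y ≤ r := by
    rintro ⟨i, _ | _⟩ y hy <;> simp only [f, cond_true, cond_false] <;>
      linarith [abs_le.1 (abs_sub_le_of_mem_closestPts hy i)]
  have hlt : ∀ p : Fin m × Bool, typeL L x p.1 = 0 → ∃ y ∈ C, f p y < r := by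
    rintro ⟨i, _ | _⟩ hi
    · exact (exists_mem_closestPts_lt_of_typeL_eq_zero hx hi).2
    · exact (exists_mem_closestPts_lt_of_typeL_eq_zero hx hi).1
  obtain ⟨z, hzC, hz⟩ := exists_mem_forall_lt_of_convexOn (convex_closestPts x L.convex)
    (nonempty_closestPts x L.closed_of_finiteDimensional ⟨0, L.zero_mem⟩)
    (s := ({i | typeL L x i = 0} : Finset (Fin m)) ×ˢ .univ) (c := fun _ => r)
    (fun p _ => hf p) (fun p _ => hle p) (fun p hp => hlt p (by simpa using hp))
  refine ⟨z, hzC, fun i hi => abs_lt.2 ⟨?_, ?_⟩⟩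
  · have := hz (i, false) (by simpa using hi)
    simp only [f, cond_false] at this
    linarith
  · have := hz (i, true) (by simpa using hi)
    simp only [f, cond_true] at this
    linarith

theorem direction_affineSpan_closestPts (hx : x ∉ L) :
    (affineSpan ℝ C).direction = L ⊓ zeroOnSupp (typeL L x) := by
  apply le_antisymm
  · rw [direction_affineSpan, vectorSpan_def, Submodule.span_le]
    rintro _ ⟨y, hy, z, hz, rfl⟩
    exact ⟨L.sub_mem hy.1 hz.1,
      fun i hi => sub_eq_zero.2 (apply_eq_of_typeL_ne_zero hx hi hy hz)⟩
  · rintro v ⟨hvL, hvσ⟩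
    obtain ⟨z, hzC, hz⟩ := exists_mem_closestPts_forall_abs_sub_lt hx
    have hmove : ∀ᶠ t in 𝓝 (0 : ℝ), z + t • v ∈ C := by
      rw [closestPts_eq_inter_closedBall] at hzC ⊢
      filter_upwards [eventually_add_smul_mem_closedBall hzC.2
        fun i hvi => hz i (not_imp_comm.1 (hvσ i) hvi)] with t ht
      exact ⟨L.add_mem hzC.1 (L.smul_mem t hvL), ht⟩
    obtain ⟨t, htC, ht⟩ := ((hmove.filter_mono nhdsWithin_le_nhds).and
      (self_mem_nhdsWithin (s := {0}ᶜ))).exists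
    have hzS := subset_affineSpan ℝ _ hzC
    rw [← Submodule.smul_mem_iff _ ht, ← AffineSubspace.vadd_mem_iff_mem_direction _ hzS,
      vadd_eq_add, add_comm]
    exact subset_affineSpan ℝ _ htC

end typeL

/-- for `x ∉ L` with `σ = type_L(x)`, the affine hull of the set of
`l∞`-closest points of `L` to `x` has the same dimension as
`L(σ) = {y ∈ L : y_i = 0 whenever σ_i ≠ 0}`. -/
theorem dim_closestPts_eq_dim_Lsigma (m : ℕ) (L : Submodule ℝ (Fin m → ℝ))
    (x : Fin m → ℝ) (hx : x ∉ L) :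
    Module.finrank ℝ (affineSpan ℝ (closestPts x (L : Set (Fin m → ℝ)))).direction
      = Module.finrank ℝ (L ⊓ zeroOnSupp (typeL L x) : Submodule ℝ (Fin m → ℝ)) := by
  rw [direction_affineSpan_closestPts hx]
end

section
/- Let L ⊆ ℝ^m be a linear subspace of dimension d. Then the l∞-closest point to x in L is unique for every x ∈ ℝ^m (i.e., C(x,L) is a singleton for all x) if and only if every nonzero vector c ∈ ℝ^m satisfying ⟨c,y⟩ = 0 for all y ∈ L has at least d + 1 nonzero coordinates. (The latter condition says exactly that the matroid underlying the oriented matroid of L is the uniform matroid U_{d,m}.) -/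
/-!
If every nonzero linear relation on `L` involves more than `d = dim L` coordinates, then the
restriction of `L` to any `≤ d` coordinates is onto and to any `≥ d` coordinates is one-to-one.
A closest point `y` to `x` is then pinned on more than `d` active coordinates (those with
`|x i - y i| = d(x, L)`): otherwise some `w ∈ L` equals `x - y` there and `y + t w` is closer.
Two closest points agree on the active coordinates of their midpoint, hence coincide.
Conversely, a relation `c` supported on `S` with `|S| ≤ d` yields a nonzero `u ∈ L` vanishing on
`S`; by Hölder the sign vector of `c` is at distance `1` from `L`, and both `0` and `u / ‖u‖`
realise that distance.
-/

open Finset Filter Topology Module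

lemma sum_eq_sum_coe_of_notMem {ι M : Type*} [Fintype ι] [AddCommMonoid M] {A : Finset ι}
    {f : ι → M} (hf : ∀ i ∉ A, f i = 0) : ∑ i, f i = ∑ j : A, f j := by
  rw [Finset.sum_coe_sort]
  exact (Finset.sum_subset (subset_univ A) fun i _ hi => hf i hi).symm

namespace Submodule

variable {K ι : Type*} [Field K] [Fintype ι]

def restrictCoords (L : Submodule K (ι → K)) (A : Finset ι) : L →ₗ[K] (A → K) :=
  (LinearMap.funLeft K K ((↑) : A → ι)).comp L.subtype

omit [Fintype ι] in
@[simp]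
lemma restrictCoords_apply (L : Submodule K (ι → K)) (A : Finset ι) (y : L) (j : A) :
    L.restrictCoords A y j = (y : ι → K) j :=
  rfl

theorem restrictCoords_surjective_iff (L : Submodule K (ι → K)) (A : Finset ι) :
    Function.Surjective (L.restrictCoords A) ↔
      ∀ c : ι → K, (∀ i ∉ A, c i = 0) → (∀ y ∈ L, ∑ i, c i * y i = 0) → c = 0 := by
  classical
  constructor
  · intro hsurj c hcA hann
    funext i
    by_cases hi : i ∈ A
    · obtain ⟨y, hy⟩ := hsurj (Pi.single ⟨i, hi⟩ 1)
      have hyA (j : A) : (y : ι → K) j = Pi.single (M := fun _ => K) ⟨i, hi⟩ 1 j := by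
        rw [← hy, restrictCoords_apply]
      calc c i = ∑ j : A, c j * (y : ι → K) j := by
            rw [Fintype.sum_eq_single ⟨i, hi⟩ fun j hj => by rw [hyA, Pi.single_eq_of_ne hj,
              mul_zero], hyA, Pi.single_eq_same, mul_one]
        _ = 0 :=
            (sum_eq_sum_coe_of_notMem fun j hj => by simp [hcA j hj]).symm.trans (hann y y.2)
    · exact hcA i hi
  · intro hann
    rw [← LinearMap.range_eq_top]
    by_contra hne
    obtain ⟨f, hf0, hf⟩ :=
      exists_dual_map_eq_bot_of_lt_top (lt_top_iff_ne_top.2 hne) inferInstance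
    have hf_apply (z : A → K) : f z = ∑ j, z j * f (Pi.single j 1) := by
      conv_lhs => rw [pi_eq_sum_univ' z]
      simp only [map_sum, map_smul, smul_eq_mul]
    obtain ⟨c, hc_coe, hcA⟩ : ∃ c : ι → K, (∀ j : A, c j = f (Pi.single j 1)) ∧ ∀ i ∉ A, c i = 0 :=
      ⟨fun i => if hi : i ∈ A then f (Pi.single ⟨i, hi⟩ 1) else 0, fun j => dif_pos j.2,
        fun i hi => dif_neg hi⟩
    have hc : c = 0 := by
      refine hann c hcA fun y hy => ?_
      have hfy := mem_map_of_mem (f := f)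
        (LinearMap.mem_range_self (L.restrictCoords A) ⟨y, hy⟩)
      rw [hf, mem_bot, hf_apply] at hfy
      calc ∑ i, c i * y i = ∑ j : A, c j * y j :=
            sum_eq_sum_coe_of_notMem fun i hi => by simp [hcA i hi]
        _ = 0 := by
            rw [← hfy]
            exact Fintype.sum_congr _ _ fun j => by rw [hc_coe, mul_comm]; rfl
    have hf_single (j : A) : f (Pi.single j 1) = 0 := by rw [← hc_coe, hc, Pi.zero_apply]
    exact hf0 (LinearMap.ext fun z => by simp [hf_apply z, hf_single])

def IsUniform (L : Submodule K (ι → K)) : Prop :=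
  ∀ c : ι → K, c ≠ 0 → (∀ y ∈ L, ∑ i, c i * y i = 0) → finrank K L + 1 ≤ {i | c i ≠ 0}.ncard

theorem IsUniform.restrictCoords_surjective {L : Submodule K (ι → K)} (hL : L.IsUniform)
    {A : Finset ι} (hA : A.card ≤ finrank K L) : Function.Surjective (L.restrictCoords A) := by
  refine (L.restrictCoords_surjective_iff A).2 fun c hcA hann => ?_
  by_contra hc
  have hsupp : {i | c i ≠ 0}.ncard ≤ A.card := by
    rw [← Set.ncard_coe_finset]
    exact Set.ncard_le_ncard fun i hi => by_contra fun hiA => hi (hcA i hiA)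
  have := hL c hc hann
  omega

theorem IsUniform.restrictCoords_injective {L : Submodule K (ι → K)} (hL : L.IsUniform)
    {A : Finset ι} (hA : finrank K L ≤ A.card) : Function.Injective (L.restrictCoords A) := by
  obtain ⟨B, hBA, hB⟩ := Finset.le_card_iff_exists_subset_card.mp hA
  have hinjB : Function.Injective (L.restrictCoords B) :=
    (LinearMap.injective_iff_surjective_of_finrank_eq_finrank (by simp [hB])).2
      (hL.restrictCoords_surjective hB.le)
  exact fun y z hyz => hinjB <| funext fun j => congrFun hyz ⟨j, hBA j.2⟩

theorem exists_ne_zero_forall_mem_eq_zero_of_annihilator (L : Submodule K (ι → K)) {c : ι → K}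
    (hc : c ≠ 0) {S : Finset ι} (hcS : ∀ i ∉ S, c i = 0) (hann : ∀ y ∈ L, ∑ i, c i * y i = 0)
    (hS : S.card ≤ finrank K L) : ∃ v ∈ L, v ≠ 0 ∧ ∀ i ∈ S, v i = 0 := by
  have hnsurj : ¬Function.Surjective (L.restrictCoords S) := fun h =>
    hc ((L.restrictCoords_surjective_iff S).1 h c hcS hann)
  have hninj : ¬Function.Injective (L.restrictCoords S) := fun h => by
    refine hnsurj ((LinearMap.injective_iff_surjective_of_finrank_eq_finrank ?_).1 h)
    exact le_antisymm (by simpa using LinearMap.finrank_le_finrank_of_injective h)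
      (by simpa using hS)
  obtain ⟨w, hw, hw0⟩ := (Submodule.ne_bot_iff _).1 (mt LinearMap.ker_eq_bot.1 hninj)
  exact ⟨w, w.2, fun h => hw0 (Subtype.ext h), fun i hi => congrFun hw ⟨i, hi⟩⟩

end Submodule

section SupNorm

variable {ι : Type*} [Fintype ι]

lemma abs_sub_apply_le_dist (x y : ι → ℝ) (i : ι) : |x i - y i| ≤ dist x y := by
  simpa [Real.dist_eq] using dist_le_pi_dist x y i

noncomputable def activeSet (x y : ι → ℝ) : Finset ι :=
  {i | |x i - y i| = dist x y}

lemma mem_activeSet {x y : ι → ℝ} {i : ι} : i ∈ activeSet x y ↔ |x i - y i| = dist x y := by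
  simp [activeSet]

theorem exists_dist_add_smul_lt {x y w : ι → ℝ} (hr : 0 < dist x y)
    (hw : ∀ i ∈ activeSet x y, w i = x i - y i) : ∃ t : ℝ, dist x (y + t • w) < dist x y := by
  have key (i : ι) : ∀ᶠ t in 𝓝[>] (0 : ℝ), |x i - (y + t • w) i| < dist x y := by
    by_cases hi : i ∈ activeSet x y
    · filter_upwards [Ioo_mem_nhdsGT (zero_lt_two' ℝ)] with t ht
      have hlin : x i - (y + t • w) i = (1 - t) * (x i - y i) := by
        simp only [Pi.add_apply, Pi.smul_apply, smul_eq_mul, hw i hi]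
        ring
      have h1t : |1 - t| < 1 := abs_sub_lt_iff.2 ⟨by linarith [ht.1], by linarith [ht.2]⟩
      rw [hlin, abs_mul, mem_activeSet.1 hi]
      nlinarith
    · have hlt : |x i - y i| < dist x y :=
        (abs_sub_apply_le_dist x y i).lt_of_ne (mt mem_activeSet.2 hi)
      have hcont : Continuous fun t : ℝ => |x i - (y + t • w) i| := by fun_prop
      refine Filter.Tendsto.eventually_lt_const hlt ?_
      simpa using (hcont.tendsto 0).mono_left nhdsWithin_le_nhds
  obtain ⟨t, ht⟩ := (Filter.eventually_all.2 key).exists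
  exact ⟨t, (dist_pi_lt_iff hr).2 fun i => by simpa [Real.dist_eq] using ht i⟩

theorem apply_eq_of_mem_activeSet_midpoint {x y₁ y₂ : ι → ℝ} {r : ℝ} (h₁ : dist x y₁ ≤ r)
    (h₂ : dist x y₂ ≤ r) (hm : dist x (midpoint ℝ y₁ y₂) = r) {i : ι}
    (hi : i ∈ activeSet x (midpoint ℝ y₁ y₂)) : y₁ i = y₂ i := by
  have hmi : |x i - (y₁ i + y₂ i) / 2| = r := by
    rw [← hm, ← mem_activeSet.1 hi, pi_midpoint_apply, midpoint_eq_smul_add, smul_eq_mul]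
    congr 2
    simp [div_eq_inv_mul]
  obtain ⟨h₁l, h₁u⟩ := abs_le.1 ((abs_sub_apply_le_dist x y₁ i).trans h₁)
  obtain ⟨h₂l, h₂u⟩ := abs_le.1 ((abs_sub_apply_le_dist x y₂ i).trans h₂)
  rcases abs_eq_abs.1 (hmi.trans (abs_of_nonneg (dist_nonneg.trans h₁)).symm) with h | h <;>
    linarith

lemma sum_mul_sub_le (c x y : ι → ℝ) : ∑ i, c i * (x i - y i) ≤ (∑ i, |c i|) * dist x y := by
  rw [Finset.sum_mul]
  refine Finset.sum_le_sum fun i _ => ?_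
  calc c i * (x i - y i) ≤ |c i| * |x i - y i| := by rw [← abs_mul]; exact le_abs_self _
    _ ≤ |c i| * dist x y := by gcongr; exact abs_sub_apply_le_dist x y i

lemma abs_sign_le_one (a : ℝ) : |(SignType.sign a : ℝ)| ≤ 1 := by
  rcases lt_trichotomy a 0 with h | h | h <;> simp [h]

theorem one_le_dist_sign {c y : ι → ℝ} (hc : c ≠ 0) (hcy : ∑ i, c i * y i = 0) :
    1 ≤ dist (fun i => (SignType.sign (c i) : ℝ)) y := by
  have hpos : 0 < ∑ i, |c i| := by
    obtain ⟨i, hi⟩ := Function.ne_iff.1 hc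
    exact Finset.sum_pos' (fun i _ => abs_nonneg _) ⟨i, Finset.mem_univ _, abs_pos.2 hi⟩
  have := sum_mul_sub_le c (fun i => (SignType.sign (c i) : ℝ)) y
  simp only [mul_sub, Finset.sum_sub_distrib, hcy, self_mul_sign, sub_zero] at this
  exact (le_mul_iff_one_le_right hpos).1 this

end SupNorm

section ClosestPoints

variable {m : ℕ}

theorem closestPts_nonempty {S : Set (Fin m → ℝ)} (hS : IsClosed S) (hne : S.Nonempty)
    (x : Fin m → ℝ) : (closestPts x S).Nonempty := by
  obtain ⟨y, hy, hxy⟩ := hS.exists_infDist_eq_dist hne x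
  exact ⟨y, hy, hxy.symm⟩

theorem mem_closestPts_of_dist_le {x y : Fin m → ℝ} {S : Set (Fin m → ℝ)} {r : ℝ} (hy : y ∈ S)
    (hlow : ∀ z ∈ S, r ≤ dist x z) (hxy : dist x y ≤ r) : y ∈ closestPts x S :=
  ⟨hy, le_antisymm (hxy.trans ((Metric.le_infDist ⟨y, hy⟩).2 hlow))
    (Metric.infDist_le_dist_of_mem hy)⟩

theorem midpoint_mem_closestPts {x y₁ y₂ : Fin m → ℝ} {S : Set (Fin m → ℝ)} (hS : Convex ℝ S)
    (h₁ : y₁ ∈ closestPts x S) (h₂ : y₂ ∈ closestPts x S) :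
    midpoint ℝ y₁ y₂ ∈ closestPts x S := by
  refine mem_closestPts_of_dist_le (hS.midpoint_mem h₁.1 h₂.1)
    (fun z hz => Metric.infDist_le_dist_of_mem hz) ?_
  calc dist x (midpoint ℝ y₁ y₂) = dist (midpoint ℝ x x) (midpoint ℝ y₁ y₂) := by
        rw [midpoint_self]
    _ ≤ (dist x y₁ + dist x y₂) / 2 := dist_midpoint_midpoint_le x x y₁ y₂
    _ = Metric.infDist x S := by rw [h₁.2, h₂.2]; ring

theorem Submodule.IsUniform.lt_card_activeSet {L : Submodule ℝ (Fin m → ℝ)} (hL : L.IsUniform)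
    {x y : Fin m → ℝ} (hy : y ∈ closestPts x (L : Set (Fin m → ℝ))) (hr : 0 < dist x y) :
    finrank ℝ L < (activeSet x y).card := by
  by_contra! hA
  obtain ⟨w, hw⟩ := hL.restrictCoords_surjective hA fun j => x j - y j
  obtain ⟨t, ht⟩ := exists_dist_add_smul_lt hr fun i hi => congrFun hw ⟨i, hi⟩
  refine ht.not_ge ?_
  rw [hy.2]
  exact Metric.infDist_le_dist_of_mem (L.add_mem hy.1 (L.smul_mem t w.2))

theorem Submodule.IsUniform.closestPts_subsingleton {L : Submodule ℝ (Fin m → ℝ)}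
    (hL : L.IsUniform) (x : Fin m → ℝ) : (closestPts x (L : Set (Fin m → ℝ))).Subsingleton := by
  intro y₁ h₁ y₂ h₂
  have hm := midpoint_mem_closestPts L.convex h₁ h₂
  rcases (Metric.infDist_nonneg (x := x) (s := (L : Set (Fin m → ℝ)))).eq_or_lt with hr | hr
  · rw [← dist_eq_zero.1 (h₁.2.trans hr.symm), ← dist_eq_zero.1 (h₂.2.trans hr.symm)]
  have hA := hL.lt_card_activeSet hm (hm.2.symm ▸ hr)
  have hv : (⟨y₁ - y₂, L.sub_mem h₁.1 h₂.1⟩ : L) = 0 := hL.restrictCoords_injective hA.le <|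
    funext fun j => by
      simpa [sub_eq_zero] using apply_eq_of_mem_activeSet_midpoint h₁.2.le h₂.2.le hm.2 j.2
  simpa [sub_eq_zero] using congrArg Subtype.val hv

theorem exists_closestPts_nontrivial {L : Submodule ℝ (Fin m → ℝ)} {c : Fin m → ℝ} (hc : c ≠ 0)
    (hann : ∀ y ∈ L, ∑ i, c i * y i = 0) (hcard : {i | c i ≠ 0}.ncard ≤ finrank ℝ L) :
    ∃ x, (closestPts x (L : Set (Fin m → ℝ))).Nontrivial := by
  classical
  obtain ⟨v, hvL, hv0, hvS⟩ := L.exists_ne_zero_forall_mem_eq_zero_of_annihilator hc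
    (S := {i | c i ≠ 0}) (fun i hi => by simpa using hi) hann (by simpa [← Set.ncard_coe_finset])
  set u : Fin m → ℝ := ‖v‖⁻¹ • v
  have hu : ‖u‖ = 1 := norm_smul_inv_norm hv0
  set s : Fin m → ℝ := fun i => SignType.sign (c i)
  have hlow : ∀ y ∈ L, 1 ≤ dist s y := fun y hy => one_le_dist_sign hc (hann y hy)
  refine ⟨s, 0, mem_closestPts_of_dist_le L.zero_mem hlow ?_, u,
    mem_closestPts_of_dist_le (L.smul_mem _ hvL) hlow ?_, fun h => by simp [← h] at hu⟩
  · exact (dist_pi_le_iff zero_le_one).2 fun i => by simpa [Real.dist_eq] using abs_sign_le_one _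
  · refine (dist_pi_le_iff zero_le_one).2 fun i => ?_
    rw [Real.dist_eq]
    by_cases hi : c i = 0
    · simpa [s, hi, ← hu] using norm_le_pi_norm u i
    · simpa [u, hvS i (by simpa using hi)] using abs_sign_le_one (c i)

end ClosestPoints

/-- the `l∞`-closest point of `L` to `x` is unique for every `x` if and only
if every nonzero linear functional vanishing on `L` has at least `d + 1` nonzero
coordinates (i.e. the matroid underlying the oriented matroid of `L` is uniform `U_{d,m}`),
where `d = dim L`. -/
theorem closest_unique_iff_uniform (m : ℕ) (L : Submodule ℝ (Fin m → ℝ)) (d : ℕ)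
    (hd : Module.finrank ℝ L = d) :
    (∀ x : Fin m → ℝ, ∃! y, y ∈ closestPts x (L : Set (Fin m → ℝ))) ↔
    (∀ c : Fin m → ℝ, c ≠ 0 → (∀ y ∈ L, ∑ i, c i * y i = 0) →
      d + 1 ≤ {i | c i ≠ 0}.ncard) := by
  subst hd
  refine ⟨fun huniq c hc hann => ?_, fun hL x => ?_⟩
  · by_contra! hlt
    obtain ⟨x, hx⟩ := exists_closestPts_nontrivial hc hann (Nat.lt_succ_iff.1 hlt)
    obtain ⟨y, -, hy⟩ := huniq x
    exact hx.not_subsingleton fun a ha b hb => (hy a ha).trans (hy b hb).symm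
  · obtain ⟨y, hy⟩ := closestPts_nonempty L.closed_of_finiteDimensional ⟨0, L.zero_mem⟩ x
    exact ⟨y, hy, fun z hz => Submodule.IsUniform.closestPts_subsingleton hL x hz hy⟩
end
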